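/- (Theorem 1, 'after' version.) Let (Θ₁, μ₁) and (Θ₂, μ₂) be probability spaces, let R* : Θ₁ × Θ₂ → ℝ be square-integrable with respect to μ₁ ⊗ μ₂, and for each n let ε_n : Θ₁ × Θ₂ → ℝ be measurable with sup_{(θ₁,θ₂)} |ε_n(θ₁,θ₂)| → 0 as n → ∞. Set R_n = R* + ε_n. If Var^a_{θ₁}(R*) > Var^a_{θ₂}(R*), then there exists N such that for all n ≥ N, Var^a_{θ₁}(R_n) > Var^a_{θ₂}(R_n). -/

import Mathlib

open MeasureTheory Filter

/-- The 'after' importance of the first hyperparameter. -/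
noncomputable def varA1 {Θ₁ Θ₂ : Type*} [MeasurableSpace Θ₁] [MeasurableSpace Θ₂]
    (μ₁ : Measure Θ₁) (μ₂ : Measure Θ₂) (f : Θ₁ × Θ₂ → ℝ) : ℝ :=
  ∫ θ₂, ∫ θ₁, (f (θ₁, θ₂) - ∫ θ₁', f (θ₁', θ₂) ∂μ₁) ^ 2 ∂μ₁ ∂μ₂

/-- The 'after' importance of the second hyperparameter. -/
noncomputable def varA2 {Θ₁ Θ₂ : Type*} [MeasurableSpace Θ₁] [MeasurableSpace Θ₂]
    (μ₁ : Measure Θ₁) (μ₂ : Measure Θ₂) (f : Θ₁ × Θ₂ → ℝ) : ℝ :=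
  ∫ θ₁, ∫ θ₂, (f (θ₁, θ₂) - ∫ θ₂', f (θ₁, θ₂') ∂μ₂) ^ 2 ∂μ₂ ∂μ₁

/-!
Both importances are averages of conditional variances, and a perturbation of sup norm `δ`
moves a variance `V` by at most `2δ V + 2δ + 4δ²`: expanding the square, the cross term
`2 a b` with `|b| ≤ 2δ` is absorbed through `2 |a| ≤ 1 + a²`. Hence both importances of
`R* + εₙ` converge to those of `R*`, and the strict inequality between the limits persists.
-/

open ProbabilityTheory Topology

lemma abs_add_sq_sub_sq_le {a b d : ℝ} (hb : |b| ≤ d) :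
    |(a + b) ^ 2 - a ^ 2| ≤ d * a ^ 2 + (d + d ^ 2) := by
  have hd : 0 ≤ d := (abs_nonneg b).trans hb
  have h2a : 2 * |a| ≤ 1 + a ^ 2 := by nlinarith [sq_nonneg (|a| - 1), sq_abs a]
  have h2ab : |2 * a + b| ≤ 2 * |a| + d :=
    (abs_add_le _ _).trans (by rw [abs_mul, abs_two]; linarith)
  calc |(a + b) ^ 2 - a ^ 2| = |b| * |2 * a + b| := by rw [← abs_mul]; ring_nf
    _ ≤ d * (2 * |a| + d) := by gcongr
    _ ≤ d * (1 + a ^ 2 + d) := by gcongr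
    _ = d * a ^ 2 + (d + d ^ 2) := by ring

section ProbabilitySpace

variable {α : Type*} [MeasurableSpace α] {μ : Measure α} [IsProbabilityMeasure μ]

lemma abs_integral_sub_le_of_ae_abs_sub_le {F G : α → ℝ} (hF : Integrable F μ)
    (hG : Integrable G μ) {c d : ℝ} (h : ∀ᵐ x ∂μ, |F x - G x| ≤ c * G x + d) :
    |∫ x, F x ∂μ - ∫ x, G x ∂μ| ≤ c * ∫ x, G x ∂μ + d := by
  rw [← integral_sub hF hG]
  calc |∫ x, F x - G x ∂μ| ≤ ∫ x, |F x - G x| ∂μ := abs_integral_le_integral_abs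
    _ ≤ ∫ x, (c * G x + d) ∂μ :=
        integral_mono_ae (hF.sub hG).abs ((hG.const_mul c).add (integrable_const d)) h
    _ = c * ∫ x, G x ∂μ + d := by
        rw [integral_add (hG.const_mul c) (integrable_const d), integral_const_mul]
        simp

lemma abs_variance_add_sub_le {X Y : α → ℝ} (hX : MemLp X 2 μ) (hY : AEStronglyMeasurable Y μ)
    {δ : ℝ} (hYδ : ∀ᵐ x ∂μ, |Y x| ≤ δ) :
    |Var[X + Y; μ] - Var[X; μ]| ≤ 2 * δ * Var[X; μ] + (2 * δ + (2 * δ) ^ 2) := by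
  have hYδ' : ∀ᵐ x ∂μ, ‖Y x‖ ≤ δ := by simpa only [Real.norm_eq_abs] using hYδ
  have hY2 : MemLp Y 2 μ := MemLp.of_bound hY δ hYδ'
  have hmeanY : |μ[Y]| ≤ δ := by simpa using norm_integral_le_of_norm_le_const hYδ'
  have hXY2 := hX.add hY2
  rw [variance_eq_integral hXY2.aemeasurable, variance_eq_integral hX.aemeasurable,
    integral_add' (hX.integrable one_le_two) (hY2.integrable one_le_two)]
  refine abs_integral_sub_le_of_ae_abs_sub_le
    (hXY2.sub (memLp_const _)).integrable_sq (hX.sub (memLp_const _)).integrable_sq ?_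
  filter_upwards [hYδ] with x hx
  have hdev : |Y x - μ[Y]| ≤ 2 * δ := (abs_sub _ _).trans (by linarith)
  simp only [Pi.add_apply, Pi.sub_apply]
  convert abs_add_sq_sub_sq_le (a := X x - μ[X]) hdev using 3
  ring

end ProbabilitySpace

section Product

variable {Θ₁ Θ₂ : Type*} [MeasurableSpace Θ₁] [MeasurableSpace Θ₂]
  {μ₁ : Measure Θ₁} {μ₂ : Measure Θ₂}

lemma varA2_eq_varA1_comp_swap (f : Θ₁ × Θ₂ → ℝ) :
    varA2 μ₁ μ₂ f = varA1 μ₂ μ₁ (f ∘ Prod.swap) := rfl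

variable [IsProbabilityMeasure μ₁] [IsProbabilityMeasure μ₂]

lemma ae_memLp_slice {f : Θ₁ × Θ₂ → ℝ} (hf : MemLp f 2 (μ₁.prod μ₂)) :
    ∀ᵐ θ₂ ∂μ₂, MemLp (fun θ₁ => f (θ₁, θ₂)) 2 μ₁ := by
  filter_upwards [hf.integrable_sq.prod_left_ae,
    hf.aestronglyMeasurable.prod_swap.prodMk_left] with θ₂ hsq hmeas
  exact (memLp_two_iff_integrable_sq hmeas).mpr hsq

lemma varA1_eq_integral_variance {f : Θ₁ × Θ₂ → ℝ} (hf : MemLp f 2 (μ₁.prod μ₂)) :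
    varA1 μ₁ μ₂ f = ∫ θ₂, Var[fun θ₁ => f (θ₁, θ₂); μ₁] ∂μ₂ := by
  refine integral_congr_ae ?_
  filter_upwards [ae_memLp_slice hf] with θ₂ hslice
  exact (variance_eq_integral hslice.aemeasurable).symm

lemma integrable_variance_slice {f : Θ₁ × Θ₂ → ℝ} (hf : MemLp f 2 (μ₁.prod μ₂)) :
    Integrable (fun θ₂ => Var[fun θ₁ => f (θ₁, θ₂); μ₁]) μ₂ := by
  have hmeas : AEStronglyMeasurable
      (fun θ₂ => ∫ θ₁, f (θ₁, θ₂) ^ 2 ∂μ₁ - (∫ θ₁, f (θ₁, θ₂) ∂μ₁) ^ 2) μ₂ :=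
    (hf.aestronglyMeasurable.pow 2).prod_swap.integral_prod_right'.sub
      (hf.aestronglyMeasurable.prod_swap.integral_prod_right'.pow 2)
  refine hf.integrable_sq.integral_prod_right.mono' (hmeas.congr ?_) ?_
  · filter_upwards [ae_memLp_slice hf] with θ₂ hslice
    exact (variance_eq_sub hslice).symm
  · filter_upwards [ae_memLp_slice hf] with θ₂ hslice
    rw [Real.norm_eq_abs, abs_of_nonneg (variance_nonneg _ _)]
    exact variance_le_expectation_sq hslice.aestronglyMeasurable

lemma abs_varA1_add_sub_le {f g : Θ₁ × Θ₂ → ℝ} (hf : MemLp f 2 (μ₁.prod μ₂)) (hg : Measurable g)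
    {δ : ℝ} (hgδ : ∀ p, |g p| ≤ δ) :
    |varA1 μ₁ μ₂ (f + g) - varA1 μ₁ μ₂ f| ≤
      2 * δ * varA1 μ₁ μ₂ f + (2 * δ + (2 * δ) ^ 2) := by
  have hg2 : MemLp g 2 (μ₁.prod μ₂) :=
    MemLp.of_bound hg.aestronglyMeasurable δ (ae_of_all _ fun p => by simpa only [Real.norm_eq_abs] using hgδ p)
  rw [varA1_eq_integral_variance (hf.add hg2), varA1_eq_integral_variance hf]
  refine abs_integral_sub_le_of_ae_abs_sub_le (integrable_variance_slice (hf.add hg2))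
    (integrable_variance_slice hf) ?_
  filter_upwards [ae_memLp_slice hf] with θ₂ hslice
  exact abs_variance_add_sub_le hslice (hg.comp measurable_prodMk_right).aestronglyMeasurable
    (ae_of_all _ fun θ₁ => hgδ (θ₁, θ₂))

lemma tendsto_varA1_add {ι : Type*} {l : Filter ι} {f : Θ₁ × Θ₂ → ℝ} {g : ι → Θ₁ × Θ₂ → ℝ}
    (hf : MemLp f 2 (μ₁.prod μ₂)) (hg : ∀ i, Measurable (g i))
    (hunif : ∀ δ > (0 : ℝ), ∀ᶠ i in l, ∀ p, |g i p| ≤ δ) :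
    Tendsto (fun i => varA1 μ₁ μ₂ (f + g i)) l (𝓝 (varA1 μ₁ μ₂ f)) := by
  set V := varA1 μ₁ μ₂ f
  have hbound : Tendsto (fun δ : ℝ => 2 * δ * V + (2 * δ + (2 * δ) ^ 2)) (𝓝[>] 0) (𝓝 0) := by
    have hcont : Continuous fun δ : ℝ => 2 * δ * V + (2 * δ + (2 * δ) ^ 2) := by fun_prop
    simpa using tendsto_nhdsWithin_of_tendsto_nhds (hcont.tendsto 0)
  rw [Metric.tendsto_nhds]
  intro η hη
  obtain ⟨δ, hδη, hδ⟩ := ((hbound.eventually (gt_mem_nhds hη)).and self_mem_nhdsWithin).exists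
  filter_upwards [hunif δ hδ] with i hi
  exact (abs_varA1_add_sub_le hf (hg i) hi).trans_lt hδη

lemma tendsto_varA2_add {ι : Type*} {l : Filter ι} {f : Θ₁ × Θ₂ → ℝ} {g : ι → Θ₁ × Θ₂ → ℝ}
    (hf : MemLp f 2 (μ₁.prod μ₂)) (hg : ∀ i, Measurable (g i))
    (hunif : ∀ δ > (0 : ℝ), ∀ᶠ i in l, ∀ p, |g i p| ≤ δ) :
    Tendsto (fun i => varA2 μ₁ μ₂ (f + g i)) l (𝓝 (varA2 μ₁ μ₂ f)) := by
  simpa only [varA2_eq_varA1_comp_swap, Pi.add_comp] using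
    tendsto_varA1_add (hf.comp_measurePreserving Measure.measurePreserving_swap)
      (fun i => (hg i).comp measurable_swap)
      (fun δ hδ => (hunif δ hδ).mono fun _ hi p => hi p.swap)

end Product

theorem importance_ranking_eventually_consistent_after
    {Θ₁ Θ₂ : Type*} [MeasurableSpace Θ₁] [MeasurableSpace Θ₂]
    (μ₁ : Measure Θ₁) (μ₂ : Measure Θ₂)
    [IsProbabilityMeasure μ₁] [IsProbabilityMeasure μ₂]
    (Rstar : Θ₁ × Θ₂ → ℝ) (hRstar : MemLp Rstar 2 (μ₁.prod μ₂))
    (ε : ℕ → Θ₁ × Θ₂ → ℝ) (hmeas : ∀ n, Measurable (ε n))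
    (hunif : ∀ δ > (0 : ℝ), ∃ N : ℕ, ∀ n ≥ N, ∀ p : Θ₁ × Θ₂, |ε n p| ≤ δ)
    (hrank : varA2 μ₁ μ₂ Rstar < varA1 μ₁ μ₂ Rstar) :
    ∃ N : ℕ, ∀ n ≥ N,
      varA2 μ₁ μ₂ (Rstar + ε n) < varA1 μ₁ μ₂ (Rstar + ε n) := by
  have hunif' : ∀ δ > (0 : ℝ), ∀ᶠ n in atTop, ∀ p, |ε n p| ≤ δ :=
    fun δ hδ => eventually_atTop.mpr (hunif δ hδ)
  have h₁ := tendsto_varA1_add hRstar hmeas hunif'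
  have h₂ := tendsto_varA2_add hRstar hmeas hunif'
  exact eventually_atTop.mp (h₂.eventually_lt h₁ hrank)
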